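/- Let γ ∈ (0,2]. Then there exists a constant C₁ > 0 (depending on L, D, D', γ and Σ_k q_k (λ'_{k+D'})^γ) such that for all x, x' ∈ [0,L]: Σ_{k=1}^∞ q_k Σ_{n=1}^∞ Σ_{m=1}^∞ ρ_n^k ρ_m^k · √(λ_n' λ_m') · |C_n(x) − C_n(x')| · |C_m(x) − C_m(x')| / (λ_n' + λ_m') ≤ C₁ · |x − x'|^γ. (By the Itô isometry this is exactly the spatial-increment second-moment bound 𝔼|∇(w_Δ(t,x) − w_Δ(t,x'))|² ≤ C₁|x−x'|^γ, uniform in t ≥ 0, of the paper's Appendix B Lemma, which yields continuity in H¹₀ of the stochastic convolution.) -/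

import Mathlib

open MeasureTheory

/-- The Dirichlet eigenvalues of the Laplacian, `λ'_{n+1} = (π(n+1)/L)²`. -/
noncomputable def lamP (L : ℝ) (n : ℕ) : ℝ := (Real.pi * (n + 1) / L) ^ 2

/-- The cosine functions `C_{n+1}(x) = √(2/L)·cos(π(n+1)x/L)`. -/
noncomputable def cosEF (L : ℝ) (n : ℕ) (x : ℝ) : ℝ :=
  Real.sqrt (2 / L) * Real.cos (Real.pi * (n + 1) * x / L)

noncomputable def aF (L : ℝ) (n : ℕ) : ℝ := Real.pi * (n + 1) / L

lemma aF_pos {L : ℝ} (hL : 0 < L) (n : ℕ) : 0 < aF L n := by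
  unfold aF; positivity

lemma aF_mono {L : ℝ} (hL : 0 < L) {n m : ℕ} (h : n ≤ m) : aF L n ≤ aF L m := by
  unfold aF; gcongr

lemma lamP_eq (L : ℝ) (n : ℕ) : lamP L n = aF L n ^ 2 := rfl

lemma cosEF_eq (L : ℝ) (n : ℕ) (x : ℝ) :
    cosEF L n x = Real.sqrt (2 / L) * Real.cos (aF L n * x) := by
  unfold cosEF aF
  rw [show Real.pi * (↑n + 1) * x / L = Real.pi * (↑n + 1) / L * x by ring]

lemma cos_diff_le (u v : ℝ) : |Real.cos u - Real.cos v| ≤ min 2 |u - v| := by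
  refine le_min ?_ ?_
  · have h1 := Real.abs_cos_le_one u
    have h2 := Real.abs_cos_le_one v
    calc |Real.cos u - Real.cos v| ≤ |Real.cos u| + |Real.cos v| := abs_sub _ _
      _ ≤ 2 := by linarith
  · rw [Real.cos_sub_cos]
    have h1 := Real.abs_sin_le_abs (x := (u + v) / 2)
    have h2 := Real.abs_sin_le_abs (x := (u - v) / 2)
    have h1' := Real.abs_sin_le_one ((u + v) / 2)
    calc |(-2) * Real.sin ((u + v) / 2) * Real.sin ((u - v) / 2)|
        = 2 * |Real.sin ((u + v) / 2)| * |Real.sin ((u - v) / 2)| := by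
          rw [abs_mul, abs_mul]; norm_num
      _ ≤ 2 * 1 * |(u - v) / 2| := by
          apply mul_le_mul _ h2 (abs_nonneg _) (by positivity)
          nlinarith
      _ = |u - v| := by rw [abs_div, abs_two]; ring
  
lemma min_two_le {t γ' : ℝ} (ht : 0 ≤ t) (h0 : 0 < γ') (h1 : γ' ≤ 1) :
    min 2 t ≤ 2 ^ (1 - γ') * t ^ γ' := by
  rcases le_total t 2 with h | h
  · rw [min_eq_right h]
    rcases eq_or_lt_of_le ht with h0t | h0t
    · rw [← h0t, Real.zero_rpow h0.ne', mul_zero]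
    · calc t = t ^ (1 - γ') * t ^ γ' := by
            rw [← Real.rpow_add h0t]; norm_num
        _ ≤ 2 ^ (1 - γ') * t ^ γ' := by
            apply mul_le_mul_of_nonneg_right
              (Real.rpow_le_rpow ht h (by linarith)) (Real.rpow_nonneg ht _)
  · rw [min_eq_left h]
    calc (2:ℝ) = 2 ^ (1 - γ') * 2 ^ γ' := by
          rw [← Real.rpow_add two_pos]; norm_num
      _ ≤ 2 ^ (1 - γ') * t ^ γ' := by
          apply mul_le_mul_of_nonneg_left
            (Real.rpow_le_rpow (by norm_num) h h0.le) (Real.rpow_nonneg (by norm_num) _)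

lemma sqrt_div_add_le {l1 l2 : ℝ} (h1 : 0 < l1) (h2 : 0 < l2) :
    Real.sqrt (l1 * l2) / (l1 + l2) ≤ 1 / 2 := by
  rw [div_le_div_iff₀ (by positivity) two_pos]
  have hs := Real.sq_sqrt (mul_nonneg h1.le h2.le)
  have hs0 := Real.sqrt_nonneg (l1 * l2)
  nlinarith [sq_nonneg (l1 - l2)]

/-- The spatial-increment second-moment bound of the Appendix B Lemma of the paper
(via the Itô isometry, `𝔼|∇(w_Δ(t,x) − w_Δ(t,x'))|² ≤ C₁|x−x'|^γ` uniformly in `t`).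
Indices are shifted by one: `q k`, `ρ k n`, `lamP n`, `cosEF n` stand for
`q_{k+1}`, `ρ_{n+1}^{k+1}`, `λ'_{n+1}`, `C_{n+1}` respectively. -/
theorem stmt_15 (L : ℝ) (hL : 0 < L) (γ : ℝ) (hγ0 : 0 < γ) (hγ2 : γ ≤ 2)
    (D D' : ℕ) (hD : 1 ≤ D)
    (ρ : ℕ → ℕ → ℝ)
    (hρ_mem : ∀ k n, ρ k n ∈ Set.Icc (0:ℝ) 1)
    -- if `k ≤ D` then `ρ_n^k = 0` for all `n > D`
    (hρ_low : ∀ k n : ℕ, k + 1 ≤ D → D < n + 1 → ρ k n = 0)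
    -- if `k > D` then `ρ_n^k = 0` unless `n > D` and `|n − k| ≤ D'`
    (hρ_high : ∀ k n : ℕ, D < k + 1 →
      ¬(D < n + 1 ∧ ((n : ℤ) - (k : ℤ)).natAbs ≤ D') → ρ k n = 0)
    (q : ℕ → ℝ) (hq_nonneg : ∀ k, 0 ≤ q k)
    (hq_sum : Summable (fun k => q k * (lamP L (k + D')) ^ γ)) :
    ∃ C₁ > (0:ℝ), ∀ x ∈ Set.Icc (0:ℝ) L, ∀ x' ∈ Set.Icc (0:ℝ) L,
      (∑' k, q k * ∑' n, ∑' m,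
          ρ k n * ρ k m * Real.sqrt (lamP L n * lamP L m)
            * |cosEF L n x - cosEF L n x'| * |cosEF L m x - cosEF L m x'|
            / (lamP L n + lamP L m))
        ≤ C₁ * |x - x'| ^ γ := by
  have hρ0 : ∀ k n, 0 ≤ ρ k n := fun k n => (hρ_mem k n).1
  have hρ1 : ∀ k n, ρ k n ≤ 1 := fun k n => (hρ_mem k n).2
  have hlamP_pos : ∀ n, 0 < lamP L n := fun n => by
    rw [lamP_eq]; exact pow_pos (aF_pos hL n) 2
  set cΔ : ℝ := Real.sqrt (2 / L) * 2 ^ (1 - γ / 2) with hcΔ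
  have hcΔ0 : 0 ≤ cΔ :=
    mul_nonneg (Real.sqrt_nonneg _) (Real.rpow_nonneg (by norm_num) _)
  set c2 : ℝ := cΔ ^ 2 / 2 with hc2
  have hc20 : 0 ≤ c2 := by positivity
  set W : ℕ → ℝ := fun k => aF L (k + D + D') ^ γ with hW
  have hW0 : ∀ k, 0 ≤ W k := fun k => Real.rpow_nonneg (aF_pos hL _).le _
  -- the support finsets
  set T : ℕ → Finset ℕ := fun k => Finset.range D ∪ Finset.Icc (k - D') (k + D') with hT
  have hTsupp : ∀ k n, n ∉ T k → ρ k n = 0 := by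
    intro k n hn
    simp only [hT, Finset.mem_union, Finset.mem_range, Finset.mem_Icc, not_or, not_and,
      not_le, not_lt] at hn
    obtain ⟨h1, h2⟩ := hn
    rcases le_or_gt (k + 1) D with hk | hk
    · exact hρ_low k n hk (by omega)
    · apply hρ_high k n hk
      rintro ⟨hn1, hn2⟩
      omega
  have hTcard : ∀ k, (T k).card ≤ D + (2 * D' + 1) := by
    intro k
    calc (T k).card ≤ (Finset.range D).card + (Finset.Icc (k - D') (k + D')).card :=
          Finset.card_union_le _ _
      _ ≤ D + (2 * D' + 1) := by rw [Finset.card_range, Nat.card_Icc]; omega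
  have hTle : ∀ k n, n ∈ T k → n ≤ k + D + D' := by
    intro k n hn
    simp only [hT, Finset.mem_union, Finset.mem_range, Finset.mem_Icc] at hn
    omega
  set B : ℝ := ((D + (2 * D' + 1) : ℕ) : ℝ) with hB
  have hB0 : 0 ≤ B := by positivity
  -- summability of q * W
  set c3 : ℝ := ((D : ℝ) + 1) ^ γ / (Real.pi / L) ^ γ with hc3
  have hqW_le : ∀ k, q k * W k ≤ c3 * (q k * lamP L (k + D') ^ γ) := by
    intro k
    have h1 : aF L (k + D + D') ≤ ((D : ℝ) + 1) * aF L (k + D') := by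
      unfold aF
      push_cast
      calc Real.pi * ((k : ℝ) + D + D' + 1) / L
          ≤ Real.pi * (((D : ℝ) + 1) * ((k : ℝ) + D' + 1)) / L := by
            gcongr
            nlinarith [Nat.cast_nonneg (α := ℝ) k, Nat.cast_nonneg (α := ℝ) D,
              Nat.cast_nonneg (α := ℝ) D']
        _ = ((D : ℝ) + 1) * (Real.pi * ((k : ℝ) + D' + 1) / L) := by ring
    have hlam_rpow : lamP L (k + D') ^ γ = aF L (k + D') ^ γ * aF L (k + D') ^ γ := by
      rw [lamP_eq, pow_two, Real.mul_rpow (aF_pos hL _).le (aF_pos hL _).le]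
    have hP : (0 : ℝ) < (Real.pi / L) ^ γ := Real.rpow_pos_of_pos (by positivity) _
    have haFγ_ge : (Real.pi / L) ^ γ ≤ aF L (k + D') ^ γ := by
      apply Real.rpow_le_rpow (by positivity) _ hγ0.le
      unfold aF
      rw [show Real.pi / L = Real.pi * 1 / L by ring]
      gcongr
      linarith [Nat.cast_nonneg (α := ℝ) (k + D')]
    have hW_le : W k ≤ c3 * lamP L (k + D') ^ γ := by
      calc W k = aF L (k + D + D') ^ γ := by simp only [hW]
        _ ≤ (((D : ℝ) + 1) * aF L (k + D')) ^ γ :=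
            Real.rpow_le_rpow (aF_pos hL _).le h1 hγ0.le
        _ = ((D : ℝ) + 1) ^ γ * aF L (k + D') ^ γ :=
            Real.mul_rpow (by positivity) (aF_pos hL _).le
        _ = (((D : ℝ) + 1) ^ γ / (Real.pi / L) ^ γ)
              * ((Real.pi / L) ^ γ * aF L (k + D') ^ γ) := by field_simp
        _ ≤ (((D : ℝ) + 1) ^ γ / (Real.pi / L) ^ γ)
              * (aF L (k + D') ^ γ * aF L (k + D') ^ γ) :=
            mul_le_mul_of_nonneg_left
              (mul_le_mul_of_nonneg_right haFγ_ge (Real.rpow_nonneg (aF_pos hL _).le _))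
              (div_nonneg (Real.rpow_nonneg (by positivity) _) hP.le)
        _ = c3 * lamP L (k + D') ^ γ := by rw [hlam_rpow, hc3]
    calc q k * W k ≤ q k * (c3 * lamP L (k + D') ^ γ) :=
          mul_le_mul_of_nonneg_left hW_le (hq_nonneg k)
      _ = c3 * (q k * lamP L (k + D') ^ γ) := by ring
  have hqW_sum : Summable (fun k => q k * W k) :=
    Summable.of_nonneg_of_le (fun k => mul_nonneg (hq_nonneg k) (hW0 k)) hqW_le
      (hq_sum.mul_left c3)
  set SW : ℝ := ∑' k, q k * W k with hSW
  have hSW0 : 0 ≤ SW := tsum_nonneg fun k => mul_nonneg (hq_nonneg k) (hW0 k)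
  refine ⟨B ^ 2 * c2 * SW + 1, by positivity, ?_⟩
  intro x hx x' hx'
  set r : ℝ := |x - x'| with hr
  have hr0 : (0 : ℝ) ≤ r := abs_nonneg _
  have hrγn : (0:ℝ) ≤ r ^ γ := Real.rpow_nonneg hr0 _
  -- increment bound
  have hΔ : ∀ n : ℕ, |cosEF L n x - cosEF L n x'| ≤ cΔ * (aF L n ^ (γ/2) * r ^ (γ/2)) := by
    intro n
    rw [cosEF_eq, cosEF_eq, ← mul_sub, abs_mul, abs_of_nonneg (Real.sqrt_nonneg _)]
    have harg : |aF L n * x - aF L n * x'| = aF L n * r := by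
      rw [← mul_sub, abs_mul, abs_of_nonneg (aF_pos hL n).le]
    calc Real.sqrt (2/L) * |Real.cos (aF L n * x) - Real.cos (aF L n * x')|
        ≤ Real.sqrt (2/L) * (min 2 (aF L n * r)) := by
          refine mul_le_mul_of_nonneg_left ?_ (Real.sqrt_nonneg _)
          rw [← harg]; exact cos_diff_le _ _
      _ ≤ Real.sqrt (2/L) * (2 ^ (1 - γ/2) * (aF L n * r) ^ (γ/2)) := by
          refine mul_le_mul_of_nonneg_left ?_ (Real.sqrt_nonneg _)
          exact min_two_le (mul_nonneg (aF_pos hL n).le hr0) (by linarith) (by linarith)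
      _ = cΔ * (aF L n ^ (γ/2) * r ^ (γ/2)) := by
          rw [Real.mul_rpow (aF_pos hL n).le hr0, hcΔ]; ring
  have hΔ0 : ∀ n : ℕ, (0:ℝ) ≤ cΔ * (aF L n ^ (γ/2) * r ^ (γ/2)) := fun n =>
    mul_nonneg hcΔ0 (mul_nonneg (Real.rpow_nonneg (aF_pos hL n).le _)
      (Real.rpow_nonneg hr0 _))
  have hrγ : r ^ (γ/2) * r ^ (γ/2) = r ^ γ := by
    rw [← Real.rpow_add' hr0 (by linarith : γ/2 + γ/2 ≠ 0)]
    norm_num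
  have haγ : ∀ j : ℕ, aF L j ^ (γ/2) * aF L j ^ (γ/2) = aF L j ^ γ := by
    intro j
    rw [← Real.rpow_add (aF_pos hL j)]
    norm_num
  -- per-term bound
  have ht0 : ∀ k n m : ℕ, (0:ℝ) ≤
      ρ k n * ρ k m * Real.sqrt (lamP L n * lamP L m)
        * |cosEF L n x - cosEF L n x'| * |cosEF L m x - cosEF L m x'|
        / (lamP L n + lamP L m) := fun k n m =>
    div_nonneg
      (mul_nonneg (mul_nonneg (mul_nonneg (mul_nonneg (hρ0 k n) (hρ0 k m))
        (Real.sqrt_nonneg _)) (abs_nonneg _)) (abs_nonneg _))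
      (add_pos (hlamP_pos n) (hlamP_pos m)).le
  have hterm : ∀ k n m : ℕ, n ∈ T k → m ∈ T k →
      ρ k n * ρ k m * Real.sqrt (lamP L n * lamP L m)
        * |cosEF L n x - cosEF L n x'| * |cosEF L m x - cosEF L m x'|
        / (lamP L n + lamP L m) ≤ c2 * (W k * r ^ γ) := by
    intro k n m hn hm
    have h12 := sqrt_div_add_le (hlamP_pos n) (hlamP_pos m)
    have hnum : ρ k n * ρ k m * |cosEF L n x - cosEF L n x'| * |cosEF L m x - cosEF L m x'|
        ≤ (cΔ * (aF L n ^ (γ/2) * r ^ (γ/2))) * (cΔ * (aF L m ^ (γ/2) * r ^ (γ/2))) := by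
      calc ρ k n * ρ k m * |cosEF L n x - cosEF L n x'| * |cosEF L m x - cosEF L m x'|
          ≤ 1 * 1 * |cosEF L n x - cosEF L n x'| * |cosEF L m x - cosEF L m x'| := by
            apply mul_le_mul _ le_rfl (abs_nonneg _) (by norm_num)
            apply mul_le_mul _ le_rfl (abs_nonneg _) (by norm_num)
            exact mul_le_mul (hρ1 k n) (hρ1 k m) (hρ0 k m) zero_le_one
        _ = |cosEF L n x - cosEF L n x'| * |cosEF L m x - cosEF L m x'| := by ring
        _ ≤ (cΔ * (aF L n ^ (γ/2) * r ^ (γ/2))) * (cΔ * (aF L m ^ (γ/2) * r ^ (γ/2))) :=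
            mul_le_mul (hΔ n) (hΔ m) (abs_nonneg _) (hΔ0 n)
    calc ρ k n * ρ k m * Real.sqrt (lamP L n * lamP L m)
        * |cosEF L n x - cosEF L n x'| * |cosEF L m x - cosEF L m x'|
        / (lamP L n + lamP L m)
        = (ρ k n * ρ k m * |cosEF L n x - cosEF L n x'| * |cosEF L m x - cosEF L m x'|)
            * (Real.sqrt (lamP L n * lamP L m) / (lamP L n + lamP L m)) := by ring
      _ ≤ ((cΔ * (aF L n ^ (γ/2) * r ^ (γ/2)))
            * (cΔ * (aF L m ^ (γ/2) * r ^ (γ/2)))) * (1/2) :=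
          mul_le_mul hnum h12
            (div_nonneg (Real.sqrt_nonneg _) (add_pos (hlamP_pos n) (hlamP_pos m)).le)
            (mul_nonneg (hΔ0 n) (hΔ0 m))
      _ = c2 * ((aF L n ^ (γ/2) * aF L m ^ (γ/2)) * (r ^ (γ/2) * r ^ (γ/2))) := by
          rw [hc2]; ring
      _ ≤ c2 * ((aF L (k+D+D') ^ (γ/2) * aF L (k+D+D') ^ (γ/2)) * (r ^ (γ/2) * r ^ (γ/2))) := by
          apply mul_le_mul_of_nonneg_left _ hc20
          apply mul_le_mul_of_nonneg_right _
            (mul_nonneg (Real.rpow_nonneg hr0 _) (Real.rpow_nonneg hr0 _))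
          exact mul_le_mul
            (Real.rpow_le_rpow (aF_pos hL n).le (aF_mono hL (hTle k n hn)) (by linarith))
            (Real.rpow_le_rpow (aF_pos hL m).le (aF_mono hL (hTle k m hm)) (by linarith))
            (Real.rpow_nonneg (aF_pos hL m).le _) (Real.rpow_nonneg (aF_pos hL _).le _)
      _ = c2 * (W k * r ^ γ) := by
          rw [hrγ, haγ (k+D+D')]
  -- reduce inner tsums to finite sums
  have htsum_m : ∀ k n : ℕ,
      (∑' m, ρ k n * ρ k m * Real.sqrt (lamP L n * lamP L m)
        * |cosEF L n x - cosEF L n x'| * |cosEF L m x - cosEF L m x'|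
        / (lamP L n + lamP L m))
      = ∑ m ∈ T k, ρ k n * ρ k m * Real.sqrt (lamP L n * lamP L m)
        * |cosEF L n x - cosEF L n x'| * |cosEF L m x - cosEF L m x'|
        / (lamP L n + lamP L m) := by
    intro k n
    apply tsum_eq_sum
    intro m hm
    rw [hTsupp k m hm]
    ring
  have hI : ∀ k : ℕ,
      (∑' n, ∑' m, ρ k n * ρ k m * Real.sqrt (lamP L n * lamP L m)
        * |cosEF L n x - cosEF L n x'| * |cosEF L m x - cosEF L m x'|
        / (lamP L n + lamP L m))
      = ∑ n ∈ T k, ∑ m ∈ T k, ρ k n * ρ k m * Real.sqrt (lamP L n * lamP L m)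
        * |cosEF L n x - cosEF L n x'| * |cosEF L m x - cosEF L m x'|
        / (lamP L n + lamP L m) := by
    intro k
    rw [tsum_congr (htsum_m k)]
    apply tsum_eq_sum
    intro n hn
    apply Finset.sum_eq_zero
    intro m _
    rw [hTsupp k n hn]
    ring
  have hIle : ∀ k : ℕ,
      (∑ n ∈ T k, ∑ m ∈ T k, ρ k n * ρ k m * Real.sqrt (lamP L n * lamP L m)
        * |cosEF L n x - cosEF L n x'| * |cosEF L m x - cosEF L m x'|
        / (lamP L n + lamP L m)) ≤ B ^ 2 * (c2 * (W k * r ^ γ)) := by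
    intro k
    have hcard : ((T k).card : ℝ) ≤ B := by
      rw [hB]; exact_mod_cast hTcard k
    have hbound0 : (0:ℝ) ≤ c2 * (W k * r ^ γ) :=
      mul_nonneg hc20 (mul_nonneg (hW0 k) hrγn)
    calc (∑ n ∈ T k, ∑ m ∈ T k, ρ k n * ρ k m * Real.sqrt (lamP L n * lamP L m)
        * |cosEF L n x - cosEF L n x'| * |cosEF L m x - cosEF L m x'|
        / (lamP L n + lamP L m))
        ≤ ∑ n ∈ T k, ∑ m ∈ T k, c2 * (W k * r ^ γ) :=
          Finset.sum_le_sum fun n hn => Finset.sum_le_sum fun m hm => hterm k n m hn hm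
      _ = ((T k).card : ℝ) * (((T k).card : ℝ) * (c2 * (W k * r ^ γ))) := by
          simp [Finset.sum_const, nsmul_eq_mul]
      _ ≤ B * (B * (c2 * (W k * r ^ γ))) := by
          apply mul_le_mul hcard _ (by positivity) hB0
          exact mul_le_mul_of_nonneg_right hcard hbound0
      _ = B ^ 2 * (c2 * (W k * r ^ γ)) := by ring
  -- assemble
  have hf_le : ∀ k : ℕ,
      q k * (∑' n, ∑' m, ρ k n * ρ k m * Real.sqrt (lamP L n * lamP L m)
        * |cosEF L n x - cosEF L n x'| * |cosEF L m x - cosEF L m x'|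
        / (lamP L n + lamP L m))
      ≤ (B ^ 2 * c2 * r ^ γ) * (q k * W k) := by
    intro k
    rw [hI k]
    calc q k * (∑ n ∈ T k, ∑ m ∈ T k, ρ k n * ρ k m * Real.sqrt (lamP L n * lamP L m)
        * |cosEF L n x - cosEF L n x'| * |cosEF L m x - cosEF L m x'|
        / (lamP L n + lamP L m))
        ≤ q k * (B ^ 2 * (c2 * (W k * r ^ γ))) :=
          mul_le_mul_of_nonneg_left (hIle k) (hq_nonneg k)
      _ = (B ^ 2 * c2 * r ^ γ) * (q k * W k) := by ring
  have hf0 : ∀ k : ℕ, (0:ℝ) ≤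
      q k * (∑' n, ∑' m, ρ k n * ρ k m * Real.sqrt (lamP L n * lamP L m)
        * |cosEF L n x - cosEF L n x'| * |cosEF L m x - cosEF L m x'|
        / (lamP L n + lamP L m)) := fun k =>
    mul_nonneg (hq_nonneg k) (tsum_nonneg fun n => tsum_nonneg fun m => ht0 k n m)
  have hg_sum : Summable (fun k => (B ^ 2 * c2 * r ^ γ) * (q k * W k)) :=
    hqW_sum.mul_left _
  have hf_sum : Summable (fun k =>
      q k * (∑' n, ∑' m, ρ k n * ρ k m * Real.sqrt (lamP L n * lamP L m)
        * |cosEF L n x - cosEF L n x'| * |cosEF L m x - cosEF L m x'|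
        / (lamP L n + lamP L m))) :=
    Summable.of_nonneg_of_le hf0 hf_le hg_sum
  calc (∑' k, q k * ∑' n, ∑' m, ρ k n * ρ k m * Real.sqrt (lamP L n * lamP L m)
        * |cosEF L n x - cosEF L n x'| * |cosEF L m x - cosEF L m x'|
        / (lamP L n + lamP L m))
      ≤ ∑' k, (B ^ 2 * c2 * r ^ γ) * (q k * W k) := Summable.tsum_le_tsum hf_le hf_sum hg_sum
    _ = (B ^ 2 * c2 * r ^ γ) * SW := by rw [tsum_mul_left, hSW]
    _ ≤ (B ^ 2 * c2 * SW + 1) * r ^ γ := by nlinarith
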